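/- A term order ≺ on the terms of S = K[x_0,…,x_n] agrees with the lexicographic order on terms of equal degree if and only if every saturated Borel ideal I ⊆ S that is a gen-segment ideal with respect to ≺ is a segment ideal with respect to ≺ (equivalently, the notions segment ideal, hilb-segment ideal, reg-segment ideal and gen-segment ideal with respect to ≺ coincide for all nonzero saturated Borel ideals). -/

import Mathlib

open Polynomial

/-- Exponent vectors of monomials (terms) of `S = K[x_0, …, x_n]`. -/
abbrev Expo (n : ℕ) := Fin (n + 1) → ℕ

/-- The degree of a term. -/
def deg {n : ℕ} (α : Expo n) : ℕ := ∑ i, α i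

/-- The exponent vector of the variable `x_i`. -/
def sing {n : ℕ} (i : Fin (n + 1)) : Expo n := Pi.single i 1

/-- `MoveDown α β` : the term `α` is obtained from `β` by an elementary move `e_j^-`,
i.e. `α = x_{j-1}·β/x_j` for some `j ≥ 1` with `β_j > 0`. -/
def MoveDown {n : ℕ} (α β : Expo n) : Prop :=
  ∃ j k : Fin (n + 1), (k : ℕ) + 1 = (j : ℕ) ∧ α + sing j = β + sing k

/-- The Borel (partial) order `α <_B β` : transitive closure of elementary moves `e_j^-`. -/
def BorelLt {n : ℕ} (α β : Expo n) : Prop := Relation.TransGen MoveDown α β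

/-- A Borel set: a set of terms closed upwards under the Borel order. -/
def IsBorelSet {n : ℕ} (B : Set (Expo n)) : Prop :=
  ∀ α β : Expo n, α ∈ B → MoveDown α β → β ∈ B

/-- A monomial ideal, identified with its set of terms: closed under multiplication
by arbitrary terms. -/
def IsMonIdeal {n : ℕ} (M : Set (Expo n)) : Prop :=
  ∀ α ∈ M, ∀ γ : Expo n, α + γ ∈ M

/-- A Borel ideal: a monomial ideal which is a Borel set in every degree. -/
def IsBorelIdeal {n : ℕ} (M : Set (Expo n)) : Prop :=
  IsMonIdeal M ∧ IsBorelSet M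

/-- `𝒩(M)_t` : the set of degree-`t` terms not lying in `M`. -/
def coIdeal {n : ℕ} (M : Set (Expo n)) (t : ℕ) : Set (Expo n) :=
  {α | deg α = t ∧ α ∉ M}

/-- `p` is the Hilbert polynomial of `S/M` : `|𝒩(M)_t| = p(t)` for all `t` large. -/
def HasHilbPoly {n : ℕ} (M : Set (Expo n)) (p : Polynomial ℚ) : Prop :=
  ∃ N : ℕ, ∀ t : ℕ, N ≤ t → ((coIdeal M t).ncard : ℚ) = p.eval (t : ℚ)

/-- Saturation for monomial ideals: a term `α` with `x_i^{k_i}·α ∈ M` for suitable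
powers of every variable already lies in `M`. -/
def IsSaturatedIdeal {n : ℕ} (M : Set (Expo n)) : Prop :=
  ∀ α : Expo n, (∀ i : Fin (n + 1), ∃ k : ℕ, α + k • sing i ∈ M) → α ∈ M

/-- A term order on the terms of `S`: a multiplicative (strict) total order with `1`
as least element and `x_0 ≺ x_1 ≺ … ≺ x_n`. -/
structure TermOrder (n : ℕ) where
  lt : Expo n → Expo n → Prop
  irrefl : ∀ a : Expo n, ¬ lt a a
  trans : ∀ a b c : Expo n, lt a b → lt b c → lt a c
  total : ∀ a b : Expo n, a ≠ b → lt a b ∨ lt b a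
  add_right : ∀ a b c : Expo n, lt a b → lt (a + c) (b + c)
  zero_lt : ∀ a : Expo n, a ≠ 0 → lt 0 a
  var_lt : ∀ i j : Fin (n + 1), i < j → lt (sing i) (sing j)

/-- `M ∩ 𝕋_t` is a segment w.r.t. the order `lt`. -/
def IsSegmentAt {n : ℕ} (lt : Expo n → Expo n → Prop) (M : Set (Expo n)) (t : ℕ) : Prop :=
  ∀ τ σ : Expo n, τ ∈ M → deg τ = t → deg σ = t → lt τ σ → σ ∈ M

/-- `M` is a segment ideal w.r.t. the order `lt`. -/
def IsSegmentIdeal {n : ℕ} (lt : Expo n → Expo n → Prop) (M : Set (Expo n)) : Prop :=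
  ∀ t : ℕ, IsSegmentAt lt M t

/-- `α` is a minimal monomial generator of the monomial ideal `M`. -/
def IsMinGen {n : ℕ} (M : Set (Expo n)) (α : Expo n) : Prop :=
  α ∈ M ∧ ∀ β γ : Expo n, β + γ = α → β ∈ M → γ = 0

/-- The ideal generated by the elements of `M` of degree `≤ s - 1`. -/
def genBelow {n : ℕ} (M : Set (Expo n)) (s : ℕ) : Set (Expo n) :=
  {x | ∃ α γ : Expo n, α ∈ M ∧ deg α < s ∧ x = α + γ}

/-- `M` is a gen-segment ideal w.r.t. `lt`: for every `s` the minimal generators of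
degree `s` are the greatest among the degree-`s` terms not in `⟨M_{≤ s-1}⟩`. -/
def IsGenSegment {n : ℕ} (lt : Expo n → Expo n → Prop) (M : Set (Expo n)) : Prop :=
  ∀ α : Expo n, IsMinGen M α → ∀ σ : Expo n, deg σ = deg α →
    σ ∉ genBelow M (deg α) → ¬ IsMinGen M σ → lt σ α

/-- `δ` is the maximal degree of a minimal monomial generator of `M`. -/
def IsMaxGenDeg {n : ℕ} (M : Set (Expo n)) (δ : ℕ) : Prop :=
  (∃ α : Expo n, IsMinGen M α ∧ deg α = δ) ∧ ∀ α : Expo n, IsMinGen M α → deg α ≤ δ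

/-- `p` is an admissible polynomial with Gotzmann decomposition of length `r`
(so `r` is its Gotzmann number):
`p(z) = ∑_{i=1}^{r} binom(z + a_i - (i-1), a_i)` with `a_1 ≥ … ≥ a_r ≥ 0`. -/
def IsGotzmannDecomp (p : Polynomial ℚ) (r : ℕ) : Prop :=
  ∃ a : Fin r → ℕ, Antitone a ∧
    ∀ t : ℕ, r ≤ t →
      p.eval (t : ℚ) = ∑ i : Fin r, ((t + a i - (i : ℕ)).choose (a i) : ℚ)

/-- An admissible polynomial: one admitting a Gotzmann decomposition. -/
def IsAdmissible (p : Polynomial ℚ) : Prop := ∃ r : ℕ, IsGotzmannDecomp p r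

/-- Setting `x_0 = x_1 = 1` in a term. -/
def trunc01 {n : ℕ} (α : Expo n) : Expo n := fun i => if (i : ℕ) ≤ 1 then 0 else α i

/-- The `x_1`-saturation of a monomial ideal: the ideal generated by the minimal
generators with `x_0 = x_1 = 1`. -/
def xOneSat {n : ℕ} (M : Set (Expo n)) : Set (Expo n) :=
  {x | ∃ α γ : Expo n, IsMinGen M α ∧ x = trunc01 α + γ}

/-- The lexicographic comparison (intended for terms of equal degree):
`α ≺_lex β` iff `α_k < β_k` at the largest index `k` where they differ. -/
def LexLt {n : ℕ} (α β : Expo n) : Prop :=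
  ∃ k : Fin (n + 1), α k < β k ∧ ∀ j : Fin (n + 1), k < j → α j = β j

/-- The reverse lexicographic comparison (intended for terms of equal degree):
`α ≺_revlex β` iff `α_h > β_h` at the smallest index `h` where they differ. -/
def RevLexLt {n : ℕ} (α β : Expo n) : Prop :=
  ∃ h : Fin (n + 1), β h < α h ∧ ∀ j : Fin (n + 1), j < h → α j = β j

/-- A graded term order. -/
def IsGraded {n : ℕ} (ord : TermOrder n) : Prop :=
  ∀ α β : Expo n, deg α < deg β → ord.lt α β

/-- A reverse term order: a graded term order such that, on terms of equal degree,
a strictly larger exponent of `x_0` makes a term strictly smaller. -/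
def IsReverseOrder {n : ℕ} (ord : TermOrder n) : Prop :=
  IsGraded ord ∧ ∀ α β : Expo n, deg α = deg β → β 0 < α 0 → ord.lt α β

/-!
If `≺` is lexicographic in each degree, a gen-segment monomial ideal `I` is a segment degree by
degree. Let `τ ∈ I` and `σ ≻ τ` of the same degree. If `τ` is a minimal generator, the gen-segment
condition puts `σ` in `I`. Otherwise `τ = x_i·α` with `α ∈ I`; dividing `σ` by its smallest
variable `x_h` gives `σ/x_h ⪰ α` (for `h ≤ i` by multiplicativity, for `h > i` by a property of
lex), so `σ/x_h ∈ I` by induction on the degree.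

Conversely, let `γ <_lex δ` differ last at `x_k`. Cancelling their common part leaves `a`,
supported below `x_k`, and `b`, divisible by `x_k`; comparing degrees gives `k > 0`. The ideal
`(x_k², x_{k+1}, …, x_n)` is saturated and Borel, and it is a gen-segment ideal for every term
order, because each of its generators dominates every term of the same degree outside it. So by
hypothesis it is a segment. It contains `x_k·b` but not `x_k·a`, which forces `a ≺ b` and hence
`γ ≺ δ`.
-/

section Terms

variable {n : ℕ}

lemma sing_apply (i j : Fin (n + 1)) : sing i j = if j = i then 1 else 0 :=
  Pi.single_apply i 1 j

lemma nsmul_sing (c : ℕ) (i : Fin (n + 1)) : c • sing i = Pi.single i c := by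
  rw [sing, ← Pi.single_smul, smul_eq_mul, mul_one]

lemma sum_nsmul_sing (a : Expo n) : ∑ i, a i • sing i = a := by
  simp only [nsmul_sing, Finset.univ_sum_single]

lemma sing_le_iff {i : Fin (n + 1)} {a : Expo n} : sing i ≤ a ↔ 1 ≤ a i := by
  refine ⟨fun h => by simpa [sing] using h i, fun h j => ?_⟩
  rw [sing_apply]
  split_ifs with hj
  · exact hj ▸ h
  · exact Nat.zero_le _

lemma deg_zero : deg (0 : Expo n) = 0 := by
  simp [deg]

lemma deg_add (a b : Expo n) : deg (a + b) = deg a + deg b :=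
  Finset.sum_add_distrib

lemma deg_sing (i : Fin (n + 1)) : deg (sing i) = 1 := by
  simp [deg, sing]

lemma eq_zero_of_deg_eq_zero {a : Expo n} (h : deg a = 0) : a = 0 :=
  funext fun j => Finset.sum_eq_zero_iff.mp h j (Finset.mem_univ j)

lemma apply_le_deg (a : Expo n) (i : Fin (n + 1)) : a i ≤ deg a :=
  Finset.single_le_sum (fun j _ => Nat.zero_le (a j)) (Finset.mem_univ i)

lemma deg_lt_deg {a b : Expo n} (h : a < b) : deg a < deg b := by
  obtain ⟨hle, i, hi⟩ := Pi.lt_def.mp h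
  exact Finset.sum_lt_sum (fun j _ => hle j) ⟨i, Finset.mem_univ i, hi⟩

lemma exists_eq_add_sing_of_ne_zero {a : Expo n} (ha : a ≠ 0) :
    ∃ b h, a = b + sing h ∧ ∀ j < h, b j = 0 := by
  obtain ⟨i, hi⟩ := Function.ne_iff.mp ha
  obtain ⟨h, hh, hmin⟩ := (Finset.univ.filter (a · ≠ 0)).exists_min_image id
    ⟨i, Finset.mem_filter.mpr ⟨Finset.mem_univ i, hi⟩⟩
  have hah : a h ≠ 0 := (Finset.mem_filter.mp hh).2
  have hle : sing h ≤ a := sing_le_iff.mpr (Nat.one_le_iff_ne_zero.mpr hah)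
  refine ⟨a - sing h, h, (tsub_add_cancel_of_le hle).symm, fun j hj => ?_⟩
  by_contra hne
  have haj : a j ≠ 0 := fun h0 => hne (by simp [h0])
  exact absurd (hmin j (Finset.mem_filter.mpr ⟨Finset.mem_univ j, haj⟩)) (not_le.mpr hj)

end Terms

section MonomialIdeals

variable {n : ℕ} {M : Set (Expo n)}

lemma genBelow_subset (hM : IsMonIdeal M) (s : ℕ) : genBelow M s ⊆ M := by
  rintro _ ⟨α, γ, hα, -, rfl⟩
  exact hM α hα γ

lemma isMinGen_of_notMem_genBelow {σ : Expo n} (hσ : σ ∈ M) (hb : σ ∉ genBelow M (deg σ)) :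
    IsMinGen M σ := by
  refine ⟨hσ, fun β γ hβγ hβ => ?_⟩
  by_contra hγ
  have hγdeg : deg γ ≠ 0 := fun h0 => hγ (eq_zero_of_deg_eq_zero h0)
  exact hb ⟨β, γ, hβ, by rw [← hβγ, deg_add]; omega, hβγ.symm⟩

end MonomialIdeals

namespace TermOrder

variable {n : ℕ} (ord : TermOrder n)

def le (a b : Expo n) : Prop := a = b ∨ ord.lt a b

variable {ord} {a b c d : Expo n}

lemma le_refl (a : Expo n) : ord.le a a := Or.inl rfl

lemma le_of_lt (h : ord.lt a b) : ord.le a b := Or.inr h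

lemma lt_asymm (h : ord.lt a b) : ¬ ord.lt b a := fun h' => ord.irrefl a (ord.trans _ _ _ h h')

lemma ne_of_lt (h : ord.lt a b) : a ≠ b := by
  rintro rfl
  exact ord.irrefl a h

lemma lt_of_le_of_ne (h : ord.le a b) (hne : a ≠ b) : ord.lt a b := h.resolve_left hne

lemma lt_of_lt_of_le (h₁ : ord.lt a b) (h₂ : ord.le b c) : ord.lt a c := by
  rcases h₂ with rfl | h₂
  exacts [h₁, ord.trans _ _ _ h₁ h₂]

lemma le_trans (h₁ : ord.le a b) (h₂ : ord.le b c) : ord.le a c := by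
  rcases h₁ with rfl | h₁
  exacts [h₂, le_of_lt (lt_of_lt_of_le h₁ h₂)]

lemma add_lt_add_left (h : ord.lt a b) (c : Expo n) : ord.lt (c + a) (c + b) := by
  simpa only [add_comm c] using ord.add_right a b c h

lemma add_le_add (h₁ : ord.le a b) (h₂ : ord.le c d) : ord.le (a + c) (b + d) := by
  have hc : ord.le (a + c) (b + c) := by
    rcases h₁ with rfl | h₁
    exacts [le_refl _, le_of_lt (ord.add_right a b c h₁)]
  have hb : ord.le (b + c) (b + d) := by
    rcases h₂ with rfl | h₂
    exacts [le_refl _, le_of_lt (add_lt_add_left h₂ b)]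
  exact le_trans hc hb

lemma lt_of_add_lt_add_right (h : ord.lt (a + c) (b + c)) : ord.lt a b := by
  have hne : a ≠ b := by
    rintro rfl
    exact ord.irrefl _ h
  exact (ord.total a b hne).resolve_right fun h' => lt_asymm h (ord.add_right b a c h')

lemma sing_le_sing {i j : Fin (n + 1)} (h : i ≤ j) : ord.le (sing i) (sing j) := by
  rcases h.lt_or_eq with h | rfl
  exacts [le_of_lt (ord.var_lt i j h), le_refl _]

lemma nsmul_le_nsmul (h : ord.le a b) (m : ℕ) : ord.le (m • a) (m • b) := by
  induction m with
  | zero => simpa using le_refl (0 : Expo n)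
  | succ m ih => simpa only [succ_nsmul] using add_le_add ih h

lemma sum_le_sum {ι : Type*} (s : Finset ι) {f g : ι → Expo n}
    (h : ∀ i ∈ s, ord.le (f i) (g i)) : ord.le (∑ i ∈ s, f i) (∑ i ∈ s, g i) := by
  classical
  induction s using Finset.induction_on with
  | empty => simpa using le_refl (0 : Expo n)
  | insert i s hi ih =>
    rw [Finset.sum_insert hi, Finset.sum_insert hi]
    exact add_le_add (h i (Finset.mem_insert_self i s))
      (ih fun j hj => h j (Finset.mem_insert_of_mem hj))

lemma le_deg_nsmul_sing {k : Fin (n + 1)} (ha : ∀ j, k < j → a j = 0) :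
    ord.le a (deg a • sing k) := by
  have h := sum_le_sum (ord := ord) Finset.univ (f := fun i => a i • sing i)
    (g := fun _ => a _ • sing k) fun i _ => by
      by_cases hik : i ≤ k
      · exact nsmul_le_nsmul (sing_le_sing hik) (a i)
      · simpa [ha i (not_le.mp hik)] using le_refl (0 : Expo n)
  rwa [sum_nsmul_sing, ← Finset.sum_smul] at h

lemma deg_nsmul_sing_le {k : Fin (n + 1)} (ha : ∀ j, j < k → a j = 0) :
    ord.le (deg a • sing k) a := by
  have h := sum_le_sum (ord := ord) Finset.univ (f := fun _ => a _ • sing k)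
    (g := fun i => a i • sing i) fun i _ => by
      by_cases hki : k ≤ i
      · exact nsmul_le_nsmul (sing_le_sing hki) (a i)
      · simpa [ha i (not_le.mp hki)] using le_refl (0 : Expo n)
  rwa [sum_nsmul_sing, ← Finset.sum_smul] at h

end TermOrder

section Lex

variable {n : ℕ}

lemma lexLt_or_lexLt_of_ne {a b : Expo n} (h : a ≠ b) : LexLt a b ∨ LexLt b a := by
  obtain ⟨i, hi⟩ := Function.ne_iff.mp h
  obtain ⟨k, hk, hmax⟩ := (Finset.univ.filter (fun j => a j ≠ b j)).exists_max_image id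
    ⟨i, Finset.mem_filter.mpr ⟨Finset.mem_univ i, hi⟩⟩
  have hup : ∀ j, k < j → a j = b j := fun j hj => by
    by_contra hne
    exact absurd (hmax j (Finset.mem_filter.mpr ⟨Finset.mem_univ j, hne⟩)) (not_le.mpr hj)
  rcases lt_or_gt_of_ne (Finset.mem_filter.mp hk).2 with hlt | hgt
  exacts [Or.inl ⟨k, hlt, hup⟩, Or.inr ⟨k, hgt, fun j hj => (hup j hj).symm⟩]

lemma lexLt_add_sing_add_sing {α β : Expo n} {h i : Fin (n + 1)} (hih : i < h)
    (hβ : ∀ j < h, β j = 0) (hdeg : deg β = deg α) (hlt : LexLt β α) :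
    LexLt (β + sing h) (α + sing i) := by
  obtain ⟨k, hk, hup⟩ := hlt
  have hhk : h ≤ k := by
    by_contra hkh
    have hle : β ≤ α := fun j => by
      rcases le_or_gt j k with hjk | hkj
      · exact (hβ j (lt_of_le_of_lt hjk (not_le.mp hkh))).symm ▸ Nat.zero_le _
      · exact (hup j hkj).le
    exact absurd hdeg (deg_lt_deg (lt_of_le_of_ne hle fun e => hk.ne (congrFun e k))).ne
  have hup' : ∀ j, k < j → (β + sing h) j = (α + sing i) j := fun j hj => by
    simp only [Pi.add_apply, sing_apply, hup j hj, if_neg (lt_of_le_of_lt hhk hj).ne',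
      if_neg (hih.trans_le hhk |>.trans hj).ne']
  rcases hhk.lt_or_eq with hhk | rfl
  · refine ⟨k, ?_, hup'⟩
    simpa [sing_apply, hhk.ne', (hih.trans hhk).ne'] using hk
  · have hk' : β h + 1 ≤ α h := hk
    rcases hk'.lt_or_eq with hk' | heq
    · exact ⟨h, by simpa [sing_apply, hih.ne'] using hk', hup'⟩
    · have hle : β + sing h ≤ α + sing i := fun j => by
        rcases lt_trichotomy j h with hj | rfl | hj
        · simp [sing_apply, hj.ne, hβ j hj]
        · simp [sing_apply, hih.ne', heq]
        · exact (hup' j hj).le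
      have hne : β + sing h ≠ α + sing i := fun e => by
        simpa [sing_apply, hβ i hih, hih.ne] using congrFun e i
      exact absurd (by rw [deg_add, deg_add, hdeg, deg_sing, deg_sing])
        (deg_lt_deg (lt_of_le_of_ne hle hne)).ne

lemma LexLt.exists_add_eq {γ δ : Expo n} (hlt : LexLt γ δ) :
    ∃ (k : Fin (n + 1)) (a b c : Expo n), γ = a + c ∧ δ = b + c ∧
      (∀ j, k ≤ j → a j = 0) ∧ 1 ≤ b k := by
  obtain ⟨k, hk, hup⟩ := hlt
  set c : Expo n := fun j => if k ≤ j then γ j else 0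
  have hcγ : c ≤ γ := fun j => by
    simp only [c]
    split_ifs <;> omega
  have hcδ : c ≤ δ := fun j => by
    simp only [c]
    split_ifs with hj
    · rcases hj.lt_or_eq with hj | rfl
      exacts [(hup j hj).le, hk.le]
    · exact Nat.zero_le _
  refine ⟨k, γ - c, δ - c, c, (tsub_add_cancel_of_le hcγ).symm,
    (tsub_add_cancel_of_le hcδ).symm, fun j hj => ?_, ?_⟩
  · simp [c, hj]
  · simp only [Pi.sub_apply, c, le_refl, if_true]
    omega

end Lex

section WeightIdeal

variable {n : ℕ}

def weight (c : Fin (n + 1) → ℕ) (a : Expo n) : ℕ := ∑ j, c j * a j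

def weightIdeal (c : Fin (n + 1) → ℕ) (d : ℕ) : Set (Expo n) := {a | d ≤ weight c a}

variable {c : Fin (n + 1) → ℕ} {d : ℕ}

lemma weight_add (c : Fin (n + 1) → ℕ) (a b : Expo n) :
    weight c (a + b) = weight c a + weight c b := by
  simp only [weight, Pi.add_apply, mul_add, Finset.sum_add_distrib]

lemma weight_nsmul (c : Fin (n + 1) → ℕ) (m : ℕ) (a : Expo n) :
    weight c (m • a) = m * weight c a := by
  simp only [weight, Pi.smul_apply, smul_eq_mul, Finset.mul_sum, mul_left_comm]

lemma weight_sing (c : Fin (n + 1) → ℕ) (i : Fin (n + 1)) : weight c (sing i) = c i := by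
  simp [weight, sing_apply]

lemma mul_apply_le_weight (c : Fin (n + 1) → ℕ) (a : Expo n) (j : Fin (n + 1)) :
    c j * a j ≤ weight c a :=
  Finset.single_le_sum (fun i _ => Nat.zero_le (c i * a i)) (Finset.mem_univ j)

lemma weightIdeal_isMonIdeal : IsMonIdeal (weightIdeal c d) := fun a ha g => by
  simp only [weightIdeal, Set.mem_ofPred_eq, weight_add] at ha ⊢
  omega

lemma weightIdeal_isBorelSet (hc : Monotone c) : IsBorelSet (weightIdeal c d) := by
  rintro α β hα ⟨j, k, hkj, hmove⟩
  have hw := congrArg (weight c) hmove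
  simp only [weight_add, weight_sing] at hw
  have hck : c k ≤ c j := hc (Fin.le_def.mpr (by omega))
  simp only [weightIdeal, Set.mem_ofPred_eq] at hα ⊢
  omega

lemma weightIdeal_isSaturated (hc : c 0 = 0) : IsSaturatedIdeal (weightIdeal c d) := fun α h => by
  obtain ⟨m, hm⟩ := h 0
  rwa [weightIdeal, Set.mem_ofPred_eq, weight_add, weight_nsmul, weight_sing, hc, mul_zero,
    add_zero] at hm

lemma eq_zero_of_notMem_weightIdeal {a : Expo n} (ha : a ∉ weightIdeal c d) {j : Fin (n + 1)}
    (hj : d ≤ c j) : a j = 0 := by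
  by_contra h
  exact ha (hj.trans ((Nat.le_mul_of_pos_right _ (Nat.pos_of_ne_zero h)).trans
    (mul_apply_le_weight c a j)))

lemma IsMinGen.eq_zero_of_weight_eq_zero {α : Expo n} (hα : IsMinGen (weightIdeal c d) α)
    {j : Fin (n + 1)} (hj : c j = 0) : α j = 0 := by
  by_contra h
  have hsplit : α - sing j + sing j = α :=
    tsub_add_cancel_of_le (sing_le_iff.mpr (Nat.one_le_iff_ne_zero.mpr h))
  have hmem : α - sing j ∈ weightIdeal c d := by
    have hw := congrArg (weight c) hsplit
    rw [weight_add, weight_sing, hj, add_zero] at hw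
    exact (show d ≤ weight c α from hα.1).trans_eq hw.symm
  have h0 := congrFun (hα.2 _ _ hsplit hmem) j
  simp [sing_apply] at h0

end WeightIdeal

section TestIdeal

variable {n : ℕ}

def testWeight (k j : Fin (n + 1)) : ℕ :=
  if j < k then 0 else if j = k then 1 else 2

lemma testWeight_of_lt {k j : Fin (n + 1)} (h : j < k) : testWeight k j = 0 := if_pos h

lemma testWeight_self (k : Fin (n + 1)) : testWeight k k = 1 := by
  simp [testWeight]

lemma testWeight_of_gt {k j : Fin (n + 1)} (h : k < j) : testWeight k j = 2 := by
  simp [testWeight, not_lt.mpr h.le, h.ne']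

lemma testWeight_monotone (k : Fin (n + 1)) : Monotone (testWeight k) := fun i j hij => by
  rw [Fin.le_def] at hij
  unfold testWeight
  split_ifs <;> simp_all only [Fin.lt_def, Fin.ext_iff] <;> omega

/-- The ideal `(x_k², x_{k+1}, …, x_n)`. -/
def testIdeal (k : Fin (n + 1)) : Set (Expo n) :=
  weightIdeal (testWeight k) 2

lemma testIdeal_isBorelIdeal (k : Fin (n + 1)) : IsBorelIdeal (testIdeal k) :=
  ⟨weightIdeal_isMonIdeal, weightIdeal_isBorelSet (testWeight_monotone k)⟩

lemma testIdeal_isSaturated {k : Fin (n + 1)} (hk : 0 < k) : IsSaturatedIdeal (testIdeal k) :=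
  weightIdeal_isSaturated (testWeight_of_lt hk)

lemma testIdeal_isGenSegment (ord : TermOrder n) (k : Fin (n + 1)) :
    IsGenSegment ord.lt (testIdeal k) := by
  intro α hα σ hdeg hσb hσm
  have hσ : σ ∉ testIdeal k := fun h => hσm (isMinGen_of_notMem_genBelow h (hdeg ▸ hσb))
  have hσk : ∀ j, k < j → σ j = 0 := fun j hj =>
    eq_zero_of_notMem_weightIdeal hσ (testWeight_of_gt hj).ge
  have hαk : ∀ j, j < k → α j = 0 := fun j hj =>
    hα.eq_zero_of_weight_eq_zero (testWeight_of_lt hj)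
  refine TermOrder.lt_of_le_of_ne (TermOrder.le_trans (TermOrder.le_deg_nsmul_sing hσk)
    (hdeg ▸ TermOrder.deg_nsmul_sing_le hαk)) ?_
  rintro rfl
  exact hσ hα.1

end TestIdeal

section Forward

variable {n : ℕ} {ord : TermOrder n}
  (hlex : ∀ α β : Expo n, deg α = deg β → (ord.lt α β ↔ LexLt α β))
  {I : Set (Expo n)} (hI : IsMonIdeal I)
include hlex hI

lemma mem_of_add_sing_lt {t : ℕ} (hseg : IsSegmentAt ord.lt I t) {α : Expo n} (hα : α ∈ I)
    (hαdeg : deg α = t) (i : Fin (n + 1)) {σ : Expo n} (hσdeg : deg σ = t + 1)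
    (hlt : ord.lt (α + sing i) σ) : σ ∈ I := by
  have hσ0 : σ ≠ 0 := by
    rintro rfl
    simp [deg_zero] at hσdeg
  obtain ⟨β, h, rfl, hβ⟩ := exists_eq_add_sing_of_ne_zero hσ0
  have hβdeg : deg β = t := by
    rw [deg_add, deg_sing] at hσdeg
    omega
  refine hI β ?_ (sing h)
  by_contra hβI
  have hβα : ord.lt β α := (ord.total β α fun e => hβI (e ▸ hα)).resolve_right
    fun h' => hβI (hseg α β hα hαdeg hβdeg h')
  apply TermOrder.lt_asymm hlt
  rcases le_or_gt h i with hhi | hih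
  · exact TermOrder.lt_of_lt_of_le (ord.add_right β α (sing h) hβα)
      (TermOrder.add_le_add (TermOrder.le_refl α) (TermOrder.sing_le_sing hhi))
  · refine (hlex _ _ (by rw [deg_add, deg_add, deg_sing, deg_sing, hβdeg, hαdeg])).mpr
      (lexLt_add_sing_add_sing hih hβ (hβdeg.trans hαdeg.symm) ((hlex β α ?_).mp hβα))
    rw [hβdeg, hαdeg]

lemma isSegmentAt_succ (hgen : IsGenSegment ord.lt I) {t : ℕ} (hseg : IsSegmentAt ord.lt I t) :
    IsSegmentAt ord.lt I (t + 1) := by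
  intro τ σ hτ hτdeg hσdeg hlt
  by_contra hσ
  by_cases hτb : τ ∈ genBelow I (t + 1)
  · obtain ⟨α, g, hα, hαdeg, rfl⟩ := hτb
    have hg0 : g ≠ 0 := by
      rintro rfl
      simp at hτdeg
      omega
    obtain ⟨g', i, rfl, -⟩ := exists_eq_add_sing_of_ne_zero hg0
    have hdeg : deg (α + g') = t := by
      rw [deg_add, deg_add, deg_sing] at hτdeg
      rw [deg_add]
      omega
    exact hσ (mem_of_add_sing_lt hlex hI hseg (hI α hα g') hdeg i hσdeg (by rwa [add_assoc]))
  · have hτm := isMinGen_of_notMem_genBelow hτ (hτdeg ▸ hτb)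
    exact TermOrder.lt_asymm hlt (hgen τ hτm σ (hσdeg.trans hτdeg.symm)
      (fun hb => hσ (genBelow_subset hI _ hb)) fun hm => hσ hm.1)

lemma isSegmentIdeal_of_isGenSegment (hgen : IsGenSegment ord.lt I) : IsSegmentIdeal ord.lt I := by
  intro t
  induction t with
  | zero =>
    intro τ σ _ hτ hσ hlt
    have e : τ = σ := by
      rw [eq_zero_of_deg_eq_zero hτ, eq_zero_of_deg_eq_zero hσ]
    exact absurd hlt (e ▸ ord.irrefl τ)
  | succ t ih => exact isSegmentAt_succ hlex hI hgen ih

end Forward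

section Backward

variable {n : ℕ} {ord : TermOrder n}

lemma lt_of_isSegmentIdeal_testIdeal {k : Fin (n + 1)} (hseg : IsSegmentIdeal ord.lt (testIdeal k))
    {a b : Expo n} (ha : ∀ j, k ≤ j → a j = 0) (hbk : 1 ≤ b k) (hdeg : deg a = deg b) :
    ord.lt a b := by
  have hσ : a + sing k ∉ testIdeal k := by
    have hw : weight (testWeight k) a = 0 :=
      Finset.sum_eq_zero fun j _ => by
        rcases lt_or_ge j k with hj | hj
        · rw [testWeight_of_lt hj, zero_mul]
        · rw [ha j hj, mul_zero]
    simp [testIdeal, weightIdeal, weight_add, weight_sing, hw, testWeight_self]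
  have hτ : b + sing k ∈ testIdeal k := by
    have := mul_apply_le_weight (testWeight k) (b + sing k) k
    rw [testWeight_self, one_mul, Pi.add_apply, sing_apply, if_pos rfl] at this
    exact (by omega : 2 ≤ b k + 1).trans this
  have hne : a + sing k ≠ b + sing k := fun e => hσ (e ▸ hτ)
  refine TermOrder.lt_of_add_lt_add_right ((ord.total _ _ hne).resolve_right fun h => hσ ?_)
  exact hseg _ _ _ hτ rfl (by rw [deg_add, deg_add, hdeg]) h

lemma lt_of_lexLt (hseg : ∀ k : Fin (n + 1), 0 < k → IsSegmentIdeal ord.lt (testIdeal k))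
    {γ δ : Expo n} (hdeg : deg γ = deg δ) (hlt : LexLt γ δ) : ord.lt γ δ := by
  obtain ⟨k, a, b, c, rfl, rfl, ha, hbk⟩ := hlt.exists_add_eq
  have hab : deg a = deg b := by
    rw [deg_add, deg_add] at hdeg
    omega
  have hk : 0 < k := by
    rw [Fin.pos_iff_ne_zero]
    rintro rfl
    have ha0 : a = 0 := funext fun j => ha j (Fin.zero_le j)
    have := apply_le_deg b 0
    rw [ha0, deg_zero] at hab
    omega
  exact ord.add_right a b c (lt_of_isSegmentIdeal_testIdeal (hseg k hk) ha hbk hab)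

end Backward

/-- A term order `≺` agrees with the lexicographic order on terms of equal
degree if and only if every saturated Borel ideal which is a gen-segment ideal w.r.t.
`≺` is a segment ideal w.r.t. `≺`. -/
theorem lex_iff_genSegment_imp_segment {n : ℕ} (ord : TermOrder n) :
    (∀ α β : Expo n, deg α = deg β → (ord.lt α β ↔ LexLt α β)) ↔
    (∀ I : Set (Expo n), IsBorelIdeal I → IsSaturatedIdeal I →
      IsGenSegment ord.lt I → IsSegmentIdeal ord.lt I) := by
  refine ⟨fun hlex I hI _ hgen => isSegmentIdeal_of_isGenSegment hlex hI.1 hgen, fun H => ?_⟩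
  have hlt : ∀ α β : Expo n, deg α = deg β → LexLt α β → ord.lt α β := fun α β =>
    lt_of_lexLt fun k hk => H _ (testIdeal_isBorelIdeal k) (testIdeal_isSaturated hk)
      (testIdeal_isGenSegment ord k)
  refine fun α β hdeg => ⟨fun h => ?_, hlt α β hdeg⟩
  rcases lexLt_or_lexLt_of_ne (TermOrder.ne_of_lt h) with h' | h'
  exacts [h', absurd (hlt β α hdeg.symm h') (TermOrder.lt_asymm h)]
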